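/- arXiv:1409.2931 — 2 statements merged into one kernel-verified Lean document; each statement's English description precedes it below -/
import Mathlib

section
/- Let L be a field of characteristic 0 containing a primitive cube root of unity ω, and let X, Y, t, u, v ∈ L with t ≠ 0 satisfy the equation Y² = X³ − 27uv(u³+8)(v³+8)X + 1728(u³−1)³t³ + 54(u⁶−20u³−8)(v⁶−20v³−8) + 1728(v³−1)³/t³. Then the same equation is again satisfied after each of the following four substitutions: (θ_u): (X,Y,t,u,v) ↦ (ω²X, Y, ωt, ωu, v); (θ_v): (X,Y,t,u,v) ↦ (ω²X, Y, ω²t, u, ωv); (ρ_u), provided u ≠ 1: (X,Y,t,u,v) ↦ ((2ω+1)²(u−1)⁻²X, (2ω+1)³(u−1)⁻³Y, (u−1)²(2ω+1)⁻²t, (u+2)/(u−1), v); (ρ_v), provided v ≠ 1: (X,Y,t,u,v) ↦ ((2ω+1)²(v−1)⁻²X, (2ω+1)³(v−1)⁻³Y, (2ω+1)²(v−1)⁻²t, u, (v+2)/(v−1)). -/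
noncomputable section

set_option maxHeartbeats 2000000

/-- The defining equation of the family `F⁽³⁾`:
`Y² = X³ − 27uv(u³+8)(v³+8)X + 1728(u³−1)³t³ + 54(u⁶−20u³−8)(v⁶−20v³−8) + 1728(v³−1)³/t³`. -/
def F3Eqn (L : Type*) [Field L] (X Y t u v : L) : Prop :=
  Y ^ 2 = X ^ 3 - 27 * u * v * (u ^ 3 + 8) * (v ^ 3 + 8) * X
    + 1728 * (u ^ 3 - 1) ^ 3 * t ^ 3
    + 54 * (u ^ 6 - 20 * u ^ 3 - 8) * (v ^ 6 - 20 * v ^ 3 - 8)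
    + 1728 * (v ^ 3 - 1) ^ 3 / t ^ 3

/-- The four lifts `θ_u, θ_v, ρ_u, ρ_v` of the generators of `SL₂(𝔽₃) × SL₂(𝔽₃)` preserve
the defining equation of the family `F⁽³⁾`. -/
theorem F3_family_automorphisms (L : Type*) [Field L] [CharZero L]
    (ω : L) (hω : IsPrimitiveRoot ω 3) (X Y t u v : L) (ht : t ≠ 0)
    (h : F3Eqn L X Y t u v) :
    -- θ_u
    F3Eqn L (ω ^ 2 * X) Y (ω * t) (ω * u) v ∧
    -- θ_v
    F3Eqn L (ω ^ 2 * X) Y (ω ^ 2 * t) u (ω * v) ∧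
    -- ρ_u
    (u ≠ 1 → F3Eqn L ((2 * ω + 1) ^ 2 / (u - 1) ^ 2 * X) ((2 * ω + 1) ^ 3 / (u - 1) ^ 3 * Y)
      ((u - 1) ^ 2 / (2 * ω + 1) ^ 2 * t) ((u + 2) / (u - 1)) v) ∧
    -- ρ_v
    (v ≠ 1 → F3Eqn L ((2 * ω + 1) ^ 2 / (v - 1) ^ 2 * X) ((2 * ω + 1) ^ 3 / (v - 1) ^ 3 * Y)
      ((2 * ω + 1) ^ 2 / (v - 1) ^ 2 * t) u ((v + 2) / (v - 1))) := by
  have hw3 : ω ^ 3 = 1 := hω.pow_eq_one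
  have hne : ω - 1 ≠ 0 := sub_ne_zero.mpr (hω.ne_one (by norm_num))
  have hws : ω ^ 2 + ω + 1 = 0 := by
    have hmul : (ω - 1) * (ω ^ 2 + ω + 1) = 0 := by linear_combination hw3
    exact (mul_eq_zero.mp hmul).resolve_left hne
  have hs2 : (2 * ω + 1) ^ 2 = -3 := by linear_combination 4 * hws
  have hs6 : ((2 * ω + 1) ^ 3) ^ 2 = -27 := by
    linear_combination ((2 * ω + 1) ^ 4 - 3 * (2 * ω + 1) ^ 2 + 9) * hs2
  have hw6 : ω ^ 6 = 1 := by linear_combination (ω ^ 3 + 1) * hw3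
  have hq3 : (ω ^ 2) ^ 3 = 1 := by rw [← pow_mul]; norm_num [hw6]
  unfold F3Eqn at h
  refine ⟨?_, ?_, ?_, ?_⟩
  · -- θ_u
    unfold F3Eqn
    have l1 : (ω * u) ^ 3 = u ^ 3 := by rw [mul_pow, hw3, one_mul]
    have l2 : (ω * u) ^ 6 = u ^ 6 := by rw [mul_pow, hw6, one_mul]
    have l3 : (ω * t) ^ 3 = t ^ 3 := by rw [mul_pow, hw3, one_mul]
    have l4 : (ω ^ 2 * X) ^ 3 = X ^ 3 := by rw [mul_pow, hq3, one_mul]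
    rw [l1, l2, l3, l4]
    linear_combination h + 27 * u * v * (u ^ 3 + 8) * (v ^ 3 + 8) * X * hw3
  · -- θ_v
    unfold F3Eqn
    have l1 : (ω * v) ^ 3 = v ^ 3 := by rw [mul_pow, hw3, one_mul]
    have l2 : (ω * v) ^ 6 = v ^ 6 := by rw [mul_pow, hw6, one_mul]
    have l3 : (ω ^ 2 * t) ^ 3 = t ^ 3 := by rw [mul_pow, hq3, one_mul]
    have l4 : (ω ^ 2 * X) ^ 3 = X ^ 3 := by rw [mul_pow, hq3, one_mul]
    rw [l1, l2, l3, l4]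
    linear_combination h + 27 * u * v * (u ^ 3 + 8) * (v ^ 3 + 8) * X * hw3
  · -- ρ_u
    intro hu
    obtain ⟨a, rfl⟩ : ∃ a, u = a + 1 := ⟨u - 1, by ring⟩
    have ha : a ≠ 0 := fun h0 => hu (by rw [h0]; norm_num)
    unfold F3Eqn
    rw [show a + 1 - 1 = a from by ring]
    have hY : ((2 * ω + 1) ^ 3 / a ^ 3 * Y) ^ 2 = -27 / a ^ 6 * Y ^ 2 := by
      rw [mul_pow, div_pow, hs6]; ring
    rw [hY, h, hs2]
    have hainv : a * a⁻¹ = 1 := mul_inv_cancel₀ ha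
    linear_combination (((3456 : L)) + ((233280 : L) * a⁻¹ ^ 3) + ((3456 : L) * a * a⁻¹) + ((233280 : L) * a * a⁻¹ ^ 3) + ((233280 : L) * a * a⁻¹ ^ 4) + ((3456 : L) * a ^ 2 * a⁻¹ ^ 2) + ((77760 : L) * a ^ 2 * a⁻¹ ^ 3) + ((233280 : L) * a ^ 2 * a⁻¹ ^ 4) + ((233280 : L) * a ^ 2 * a⁻¹ ^ 5) + ((12096 : L) * a ^ 3 * a⁻¹ ^ 3) + ((77760 : L) * a ^ 3 * a⁻¹ ^ 4) + ((233280 : L) * a ^ 3 * a⁻¹ ^ 5) + ((12096 : L) * a ^ 4 * a⁻¹ ^ 4) + ((77760 : L) * a ^ 4 * a⁻¹ ^ 5) + ((12096 : L) * a ^ 5 * a⁻¹ ^ 5) + ((8640 : L) * v ^ 3) + ((583200 : L) * v ^ 3 * a⁻¹ ^ 3) + ((8640 : L) * v ^ 3 * a * a⁻¹) + ((583200 : L) * v ^ 3 * a * a⁻¹ ^ 3) + ((583200 : L) * v ^ 3 * a * a⁻¹ ^ 4) + ((8640 : L) * v ^ 3 * a ^ 2 * a⁻¹ ^ 2) + ((194400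 : L) * v ^ 3 * a ^ 2 * a⁻¹ ^ 3) + ((583200 : L) * v ^ 3 * a ^ 2 * a⁻¹ ^ 4) + ((583200 : L) * v ^ 3 * a ^ 2 * a⁻¹ ^ 5) + ((30240 : L) * v ^ 3 * a ^ 3 * a⁻¹ ^ 3) + ((194400 : L) * v ^ 3 * a ^ 3 * a⁻¹ ^ 4) + ((583200 : L) * v ^ 3 * a ^ 3 * a⁻¹ ^ 5) + ((30240 : L) * v ^ 3 * a ^ 4 * a⁻¹ ^ 4) + ((194400 : L) * v ^ 3 * a ^ 4 * a⁻¹ ^ 5) + ((30240 : L) * v ^ 3 * a ^ 5 * a⁻¹ ^ 5) + ((-432 : L) * v ^ 6) + ((-29160 : L) * v ^ 6 * a⁻¹ ^ 3) + ((-432 : L) * v ^ 6 * a * a⁻¹) + ((-29160 : L) * v ^ 6 * a * a⁻¹ ^ 3) + ((-29160 : L) * v ^ 6 * a * a⁻¹ ^ 4) + ((-432 : L) * v ^ 6 * a ^ 2 * a⁻¹ ^ 2) + ((-9720 : L) * v ^ 6 * a ^ 2 * a⁻¹ ^ 3) + ((-29160 : L) * v ^ 6 * a ^ 2 * a⁻¹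 ^ 4) + ((-29160 : L) * v ^ 6 * a ^ 2 * a⁻¹ ^ 5) + ((-1512 : L) * v ^ 6 * a ^ 3 * a⁻¹ ^ 3) + ((-9720 : L) * v ^ 6 * a ^ 3 * a⁻¹ ^ 4) + ((-29160 : L) * v ^ 6 * a ^ 3 * a⁻¹ ^ 5) + ((-1512 : L) * v ^ 6 * a ^ 4 * a⁻¹ ^ 4) + ((-9720 : L) * v ^ 6 * a ^ 4 * a⁻¹ ^ 5) + ((-1512 : L) * v ^ 6 * a ^ 5 * a⁻¹ ^ 5) + ((1259712 : L) * t ^ 3 * a ^ 3 * a⁻¹ ^ 6) + ((3779136 : L) * t ^ 3 * a ^ 4 * a⁻¹ ^ 6) + ((1259712 : L) * t ^ 3 * a ^ 4 * a⁻¹ ^ 7) + ((5038848 : L) * t ^ 3 * a ^ 5 * a⁻¹ ^ 6) + ((3779136 : L) * t ^ 3 * a ^ 5 * a⁻¹ ^ 7) + ((1259712 : L) * t ^ 3 * a ^ 5 * a⁻¹ ^ 8) + ((64 : L) * t ^ 3 * a ^ 6) + ((-5184 : L) * t ^ 3 * a ^ 6 * a⁻¹ ^ 3) + ((3919104 : L)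 * t ^ 3 * a ^ 6 * a⁻¹ ^ 6) + ((5038848 : L) * t ^ 3 * a ^ 6 * a⁻¹ ^ 7) + ((3779136 : L) * t ^ 3 * a ^ 6 * a⁻¹ ^ 8) + ((64 : L) * t ^ 3 * a ^ 7 * a⁻¹) + ((-5184 : L) * t ^ 3 * a ^ 7 * a⁻¹ ^ 3) + ((-5184 : L) * t ^ 3 * a ^ 7 * a⁻¹ ^ 4) + ((1959552 : L) * t ^ 3 * a ^ 7 * a⁻¹ ^ 6) + ((3919104 : L) * t ^ 3 * a ^ 7 * a⁻¹ ^ 7) + ((5038848 : L) * t ^ 3 * a ^ 7 * a⁻¹ ^ 8) + ((64 : L) * t ^ 3 * a ^ 8 * a⁻¹ ^ 2) + ((-1728 : L) * t ^ 3 * a ^ 8 * a⁻¹ ^ 3) + ((-5184 : L) * t ^ 3 * a ^ 8 * a⁻¹ ^ 4) + ((-5184 : L) * t ^ 3 * a ^ 8 * a⁻¹ ^ 5) + ((653184 : L) * t ^ 3 * a ^ 8 * a⁻¹ ^ 6) + ((1959552 : L) * t ^ 3 * a ^ 8 * a⁻¹ ^ 7) + ((3919104 : L) * t ^ 3 * a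 ^ 8 * a⁻¹ ^ 8) + ((-128 : L) * t ^ 3 * a ^ 9 * a⁻¹ ^ 3) + ((-1728 : L) * t ^ 3 * a ^ 9 * a⁻¹ ^ 4) + ((-5184 : L) * t ^ 3 * a ^ 9 * a⁻¹ ^ 5) + ((145152 : L) * t ^ 3 * a ^ 9 * a⁻¹ ^ 6) + ((653184 : L) * t ^ 3 * a ^ 9 * a⁻¹ ^ 7) + ((1959552 : L) * t ^ 3 * a ^ 9 * a⁻¹ ^ 8) + ((-128 : L) * t ^ 3 * a ^ 10 * a⁻¹ ^ 4) + ((-1728 : L) * t ^ 3 * a ^ 10 * a⁻¹ ^ 5) + ((20736 : L) * t ^ 3 * a ^ 10 * a⁻¹ ^ 6) + ((145152 : L) * t ^ 3 * a ^ 10 * a⁻¹ ^ 7) + ((653184 : L) * t ^ 3 * a ^ 10 * a⁻¹ ^ 8) + ((-128 : L) * t ^ 3 * a ^ 11 * a⁻¹ ^ 5) + ((1728 : L) * t ^ 3 * a ^ 11 * a⁻¹ ^ 6) + ((20736 : L) * t ^ 3 * a ^ 11 * a⁻¹ ^ 7) + ((145152 : L) * t ^ 3 * a ^ 11 * a⁻¹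 ^ 8) + ((64 : L) * t ^ 3 * a ^ 12 * a⁻¹ ^ 6) + ((1728 : L) * t ^ 3 * a ^ 12 * a⁻¹ ^ 7) + ((20736 : L) * t ^ 3 * a ^ 12 * a⁻¹ ^ 8) + ((64 : L) * t ^ 3 * a ^ 13 * a⁻¹ ^ 7) + ((1728 : L) * t ^ 3 * a ^ 13 * a⁻¹ ^ 8) + ((64 : L) * t ^ 3 * a ^ 14 * a⁻¹ ^ 8) + ((15552 : L) * X * v * a⁻¹ ^ 3) + ((5184 : L) * X * v * a * a⁻¹ ^ 3) + ((15552 : L) * X * v * a * a⁻¹ ^ 4) + ((5184 : L) * X * v * a ^ 2 * a⁻¹ ^ 4) + ((15552 : L) * X * v * a ^ 2 * a⁻¹ ^ 5) + ((5184 : L) * X * v * a ^ 3 * a⁻¹ ^ 5) + ((1944 : L) * X * v ^ 4 * a⁻¹ ^ 3) + ((648 : L) * X * v ^ 4 * a * a⁻¹ ^ 3) + ((1944 : L) * X * v ^ 4 * a * a⁻¹ ^ 4) + ((648 : L) * X * v ^ 4 * a ^ 2 * a⁻¹ ^ 4) + ((1944 : L) * X * v ^ 4 * a ^ 2 * a⁻¹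 ^ 5) + ((648 : L) * X * v ^ 4 * a ^ 3 * a⁻¹ ^ 5)) * hainv
  · -- ρ_v
    intro hv
    obtain ⟨a, rfl⟩ : ∃ a, v = a + 1 := ⟨v - 1, by ring⟩
    have ha : a ≠ 0 := fun h0 => hv (by rw [h0]; norm_num)
    unfold F3Eqn
    rw [show a + 1 - 1 = a from by ring]
    have hY : ((2 * ω + 1) ^ 3 / a ^ 3 * Y) ^ 2 = -27 / a ^ 6 * Y ^ 2 := by
      rw [mul_pow, div_pow, hs6]; ring
    rw [hY, h, hs2]
    have hainv : a * a⁻¹ = 1 := mul_inv_cancel₀ ha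
    have hBa : a⁻¹⁻¹ = a := inv_inv a
    linear_combination (((3456 : L)) + ((233280 : L) * a⁻¹ ^ 3) + ((3456 : L) * a * a⁻¹) + ((233280 : L) * a * a⁻¹ ^ 3) + ((233280 : L) * a * a⁻¹ ^ 4) + ((3456 : L) * a ^ 2 * a⁻¹ ^ 2) + ((77760 : L) * a ^ 2 * a⁻¹ ^ 3) + ((233280 : L) * a ^ 2 * a⁻¹ ^ 4) + ((233280 : L) * a ^ 2 * a⁻¹ ^ 5) + ((12096 : L) * a ^ 3 * a⁻¹ ^ 3) + ((77760 : L) * a ^ 3 * a⁻¹ ^ 4) + ((233280 : L) * a ^ 3 * a⁻¹ ^ 5) + ((1259712 : L) * a ^ 3 * a⁻¹ ^ 6 * t⁻¹ ^ 3) + ((12096 : L) * a ^ 4 * a⁻¹ ^ 4) + ((77760 : L) * a ^ 4 * a⁻¹ ^ 5) + ((3779136 : L) * a ^ 4 * a⁻¹ ^ 6 * t⁻¹ ^ 3) + ((1259712 : L) * a ^ 4 * a⁻¹ ^ 7 * t⁻¹ ^ 3) + ((12096 : L) * a ^ 5 * a⁻¹ ^ 5) + ((5038848 : L) * a ^ 5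 * a⁻¹ ^ 6 * t⁻¹ ^ 3) + ((3779136 : L) * a ^ 5 * a⁻¹ ^ 7 * t⁻¹ ^ 3) + ((1259712 : L) * a ^ 5 * a⁻¹ ^ 8 * t⁻¹ ^ 3) + ((64 : L) * a ^ 6 * t⁻¹ ^ 3) + ((-5184 : L) * a ^ 6 * a⁻¹ ^ 3 * t⁻¹ ^ 3) + ((3919104 : L) * a ^ 6 * a⁻¹ ^ 6 * t⁻¹ ^ 3) + ((5038848 : L) * a ^ 6 * a⁻¹ ^ 7 * t⁻¹ ^ 3) + ((3779136 : L) * a ^ 6 * a⁻¹ ^ 8 * t⁻¹ ^ 3) + ((64 : L) * a ^ 7 * a⁻¹ * t⁻¹ ^ 3) + ((-5184 : L) * a ^ 7 * a⁻¹ ^ 3 * t⁻¹ ^ 3) + ((-5184 : L) * a ^ 7 * a⁻¹ ^ 4 * t⁻¹ ^ 3) + ((1959552 : L) * a ^ 7 * a⁻¹ ^ 6 * t⁻¹ ^ 3) + ((3919104 : L) * a ^ 7 * a⁻¹ ^ 7 * t⁻¹ ^ 3) + ((5038848 : L) * a ^ 7 * a⁻¹ ^ 8 * t⁻¹ ^ 3)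 + ((64 : L) * a ^ 8 * a⁻¹ ^ 2 * t⁻¹ ^ 3) + ((-1728 : L) * a ^ 8 * a⁻¹ ^ 3 * t⁻¹ ^ 3) + ((-5184 : L) * a ^ 8 * a⁻¹ ^ 4 * t⁻¹ ^ 3) + ((-5184 : L) * a ^ 8 * a⁻¹ ^ 5 * t⁻¹ ^ 3) + ((653184 : L) * a ^ 8 * a⁻¹ ^ 6 * t⁻¹ ^ 3) + ((1959552 : L) * a ^ 8 * a⁻¹ ^ 7 * t⁻¹ ^ 3) + ((3919104 : L) * a ^ 8 * a⁻¹ ^ 8 * t⁻¹ ^ 3) + ((-128 : L) * a ^ 9 * a⁻¹ ^ 3 * t⁻¹ ^ 3) + ((-1728 : L) * a ^ 9 * a⁻¹ ^ 4 * t⁻¹ ^ 3) + ((-5184 : L) * a ^ 9 * a⁻¹ ^ 5 * t⁻¹ ^ 3) + ((145152 : L) * a ^ 9 * a⁻¹ ^ 6 * t⁻¹ ^ 3) + ((653184 : L) * a ^ 9 * a⁻¹ ^ 7 * t⁻¹ ^ 3) + ((1959552 : L) * a ^ 9 * a⁻¹ ^ 8 * t⁻¹ ^ 3) + ((-128 :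 L) * a ^ 10 * a⁻¹ ^ 4 * t⁻¹ ^ 3) + ((-1728 : L) * a ^ 10 * a⁻¹ ^ 5 * t⁻¹ ^ 3) + ((20736 : L) * a ^ 10 * a⁻¹ ^ 6 * t⁻¹ ^ 3) + ((145152 : L) * a ^ 10 * a⁻¹ ^ 7 * t⁻¹ ^ 3) + ((653184 : L) * a ^ 10 * a⁻¹ ^ 8 * t⁻¹ ^ 3) + ((-128 : L) * a ^ 11 * a⁻¹ ^ 5 * t⁻¹ ^ 3) + ((1728 : L) * a ^ 11 * a⁻¹ ^ 6 * t⁻¹ ^ 3) + ((20736 : L) * a ^ 11 * a⁻¹ ^ 7 * t⁻¹ ^ 3) + ((145152 : L) * a ^ 11 * a⁻¹ ^ 8 * t⁻¹ ^ 3) + ((64 : L) * a ^ 12 * a⁻¹ ^ 6 * t⁻¹ ^ 3) + ((1728 : L) * a ^ 12 * a⁻¹ ^ 7 * t⁻¹ ^ 3) + ((20736 : L) * a ^ 12 * a⁻¹ ^ 8 * t⁻¹ ^ 3) + ((64 : L) * a ^ 13 * a⁻¹ ^ 7 * t⁻¹ ^ 3) + ((1728 : L) * a ^ 13 * a⁻¹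 ^ 8 * t⁻¹ ^ 3) + ((64 : L) * a ^ 14 * a⁻¹ ^ 8 * t⁻¹ ^ 3) + ((8640 : L) * u ^ 3) + ((583200 : L) * u ^ 3 * a⁻¹ ^ 3) + ((8640 : L) * u ^ 3 * a * a⁻¹) + ((583200 : L) * u ^ 3 * a * a⁻¹ ^ 3) + ((583200 : L) * u ^ 3 * a * a⁻¹ ^ 4) + ((8640 : L) * u ^ 3 * a ^ 2 * a⁻¹ ^ 2) + ((194400 : L) * u ^ 3 * a ^ 2 * a⁻¹ ^ 3) + ((583200 : L) * u ^ 3 * a ^ 2 * a⁻¹ ^ 4) + ((583200 : L) * u ^ 3 * a ^ 2 * a⁻¹ ^ 5) + ((30240 : L) * u ^ 3 * a ^ 3 * a⁻¹ ^ 3) + ((194400 : L) * u ^ 3 * a ^ 3 * a⁻¹ ^ 4) + ((583200 : L) * u ^ 3 * a ^ 3 * a⁻¹ ^ 5) + ((30240 : L) * u ^ 3 * a ^ 4 * a⁻¹ ^ 4) + ((194400 : L) * u ^ 3 * a ^ 4 * a⁻¹ ^ 5) + ((30240 : L) * u ^ 3 * a ^ 5 * a⁻¹ ^ 5) + ((-432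 : L) * u ^ 6) + ((-29160 : L) * u ^ 6 * a⁻¹ ^ 3) + ((-432 : L) * u ^ 6 * a * a⁻¹) + ((-29160 : L) * u ^ 6 * a * a⁻¹ ^ 3) + ((-29160 : L) * u ^ 6 * a * a⁻¹ ^ 4) + ((-432 : L) * u ^ 6 * a ^ 2 * a⁻¹ ^ 2) + ((-9720 : L) * u ^ 6 * a ^ 2 * a⁻¹ ^ 3) + ((-29160 : L) * u ^ 6 * a ^ 2 * a⁻¹ ^ 4) + ((-29160 : L) * u ^ 6 * a ^ 2 * a⁻¹ ^ 5) + ((-1512 : L) * u ^ 6 * a ^ 3 * a⁻¹ ^ 3) + ((-9720 : L) * u ^ 6 * a ^ 3 * a⁻¹ ^ 4) + ((-29160 : L) * u ^ 6 * a ^ 3 * a⁻¹ ^ 5) + ((-1512 : L) * u ^ 6 * a ^ 4 * a⁻¹ ^ 4) + ((-9720 : L) * u ^ 6 * a ^ 4 * a⁻¹ ^ 5) + ((-1512 : L) * u ^ 6 * a ^ 5 * a⁻¹ ^ 5) + ((15552 : L) * X * u * a⁻¹ ^ 3) + ((5184 : L) * X * u * a * a⁻¹ ^ 3) + ((15552 :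 L) * X * u * a * a⁻¹ ^ 4) + ((5184 : L) * X * u * a ^ 2 * a⁻¹ ^ 4) + ((15552 : L) * X * u * a ^ 2 * a⁻¹ ^ 5) + ((5184 : L) * X * u * a ^ 3 * a⁻¹ ^ 5) + ((1944 : L) * X * u ^ 4 * a⁻¹ ^ 3) + ((648 : L) * X * u ^ 4 * a * a⁻¹ ^ 3) + ((1944 : L) * X * u ^ 4 * a * a⁻¹ ^ 4) + ((648 : L) * X * u ^ 4 * a ^ 2 * a⁻¹ ^ 4) + ((1944 : L) * X * u ^ 4 * a ^ 2 * a⁻¹ ^ 5) + ((648 : L) * X * u ^ 4 * a ^ 3 * a⁻¹ ^ 5)) * hainv + (((-64 : L) * t⁻¹ ^ 3 * a⁻¹⁻¹ ^ 5) + ((5184 : L) * a⁻¹ ^ 3 * t⁻¹ ^ 3 * a⁻¹⁻¹ ^ 5) + ((-139968 : L) * a⁻¹ ^ 6 * t⁻¹ ^ 3 * a⁻¹⁻¹ ^ 5) + ((1259712 : L) * a⁻¹ ^ 9 * t⁻¹ ^ 3 * a⁻¹⁻¹ ^ 5) + ((-64 : L) * a * t⁻¹ ^ 3 * a⁻¹⁻¹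 ^ 4) + ((5184 : L) * a * a⁻¹ ^ 3 * t⁻¹ ^ 3 * a⁻¹⁻¹ ^ 4) + ((5184 : L) * a * a⁻¹ ^ 3 * t⁻¹ ^ 3 * a⁻¹⁻¹ ^ 5) + ((-139968 : L) * a * a⁻¹ ^ 6 * t⁻¹ ^ 3 * a⁻¹⁻¹ ^ 4) + ((-279936 : L) * a * a⁻¹ ^ 6 * t⁻¹ ^ 3 * a⁻¹⁻¹ ^ 5) + ((1259712 : L) * a * a⁻¹ ^ 9 * t⁻¹ ^ 3 * a⁻¹⁻¹ ^ 4) + ((3779136 : L) * a * a⁻¹ ^ 9 * t⁻¹ ^ 3 * a⁻¹⁻¹ ^ 5) + ((-64 : L) * a ^ 2 * t⁻¹ ^ 3 * a⁻¹⁻¹ ^ 3) + ((5184 : L) * a ^ 2 * a⁻¹ ^ 3 * t⁻¹ ^ 3 * a⁻¹⁻¹ ^ 3) + ((5184 : L) * a ^ 2 * a⁻¹ ^ 3 * t⁻¹ ^ 3 * a⁻¹⁻¹ ^ 4) + ((1728 : L) * a ^ 2 * a⁻¹ ^ 3 * t⁻¹ ^ 3 * a⁻¹⁻¹ ^ 5)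 + ((-139968 : L) * a ^ 2 * a⁻¹ ^ 6 * t⁻¹ ^ 3 * a⁻¹⁻¹ ^ 3) + ((-279936 : L) * a ^ 2 * a⁻¹ ^ 6 * t⁻¹ ^ 3 * a⁻¹⁻¹ ^ 4) + ((-233280 : L) * a ^ 2 * a⁻¹ ^ 6 * t⁻¹ ^ 3 * a⁻¹⁻¹ ^ 5) + ((1259712 : L) * a ^ 2 * a⁻¹ ^ 9 * t⁻¹ ^ 3 * a⁻¹⁻¹ ^ 3) + ((3779136 : L) * a ^ 2 * a⁻¹ ^ 9 * t⁻¹ ^ 3 * a⁻¹⁻¹ ^ 4) + ((5038848 : L) * a ^ 2 * a⁻¹ ^ 9 * t⁻¹ ^ 3 * a⁻¹⁻¹ ^ 5) + ((-64 : L) * a ^ 3 * t⁻¹ ^ 3 * a⁻¹⁻¹ ^ 2) + ((5184 : L) * a ^ 3 * a⁻¹ ^ 3 * t⁻¹ ^ 3 * a⁻¹⁻¹ ^ 2) + ((5184 : L) * a ^ 3 * a⁻¹ ^ 3 * t⁻¹ ^ 3 * a⁻¹⁻¹ ^ 3) + ((1728 : L) * a ^ 3 * a⁻¹ ^ 3 *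 t⁻¹ ^ 3 * a⁻¹⁻¹ ^ 4) + ((192 : L) * a ^ 3 * a⁻¹ ^ 3 * t⁻¹ ^ 3 * a⁻¹⁻¹ ^ 5) + ((-139968 : L) * a ^ 3 * a⁻¹ ^ 6 * t⁻¹ ^ 3 * a⁻¹⁻¹ ^ 2) + ((-279936 : L) * a ^ 3 * a⁻¹ ^ 6 * t⁻¹ ^ 3 * a⁻¹⁻¹ ^ 3) + ((-233280 : L) * a ^ 3 * a⁻¹ ^ 6 * t⁻¹ ^ 3 * a⁻¹⁻¹ ^ 4) + ((-103680 : L) * a ^ 3 * a⁻¹ ^ 6 * t⁻¹ ^ 3 * a⁻¹⁻¹ ^ 5) + ((1259712 : L) * a ^ 3 * a⁻¹ ^ 9 * t⁻¹ ^ 3 * a⁻¹⁻¹ ^ 2) + ((3779136 : L) * a ^ 3 * a⁻¹ ^ 9 * t⁻¹ ^ 3 * a⁻¹⁻¹ ^ 3) + ((5038848 : L) * a ^ 3 * a⁻¹ ^ 9 * t⁻¹ ^ 3 * a⁻¹⁻¹ ^ 4) + ((3919104 : L) * a ^ 3 * a⁻¹ ^ 9 * t⁻¹ ^ 3 * a⁻¹⁻¹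 ^ 5) + ((-64 : L) * a ^ 4 * t⁻¹ ^ 3 * a⁻¹⁻¹) + ((5184 : L) * a ^ 4 * a⁻¹ ^ 3 * t⁻¹ ^ 3 * a⁻¹⁻¹) + ((5184 : L) * a ^ 4 * a⁻¹ ^ 3 * t⁻¹ ^ 3 * a⁻¹⁻¹ ^ 2) + ((1728 : L) * a ^ 4 * a⁻¹ ^ 3 * t⁻¹ ^ 3 * a⁻¹⁻¹ ^ 3) + ((192 : L) * a ^ 4 * a⁻¹ ^ 3 * t⁻¹ ^ 3 * a⁻¹⁻¹ ^ 4) + ((-139968 : L) * a ^ 4 * a⁻¹ ^ 6 * t⁻¹ ^ 3 * a⁻¹⁻¹) + ((-279936 : L) * a ^ 4 * a⁻¹ ^ 6 * t⁻¹ ^ 3 * a⁻¹⁻¹ ^ 2) + ((-233280 : L) * a ^ 4 * a⁻¹ ^ 6 * t⁻¹ ^ 3 * a⁻¹⁻¹ ^ 3) + ((-103680 : L) * a ^ 4 * a⁻¹ ^ 6 * t⁻¹ ^ 3 * a⁻¹⁻¹ ^ 4) + ((-25920 : L) * a ^ 4 * a⁻¹ ^ 6 * t⁻¹ ^ 3 *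 a⁻¹⁻¹ ^ 5) + ((1259712 : L) * a ^ 4 * a⁻¹ ^ 9 * t⁻¹ ^ 3 * a⁻¹⁻¹) + ((3779136 : L) * a ^ 4 * a⁻¹ ^ 9 * t⁻¹ ^ 3 * a⁻¹⁻¹ ^ 2) + ((5038848 : L) * a ^ 4 * a⁻¹ ^ 9 * t⁻¹ ^ 3 * a⁻¹⁻¹ ^ 3) + ((3919104 : L) * a ^ 4 * a⁻¹ ^ 9 * t⁻¹ ^ 3 * a⁻¹⁻¹ ^ 4) + ((1959552 : L) * a ^ 4 * a⁻¹ ^ 9 * t⁻¹ ^ 3 * a⁻¹⁻¹ ^ 5) + ((-64 : L) * a ^ 5 * t⁻¹ ^ 3) + ((5184 : L) * a ^ 5 * a⁻¹ ^ 3 * t⁻¹ ^ 3) + ((5184 : L) * a ^ 5 * a⁻¹ ^ 3 * t⁻¹ ^ 3 * a⁻¹⁻¹) + ((1728 : L) * a ^ 5 * a⁻¹ ^ 3 * t⁻¹ ^ 3 * a⁻¹⁻¹ ^ 2) + ((192 : L) * a ^ 5 * a⁻¹ ^ 3 * t⁻¹ ^ 3 * a⁻¹⁻¹ ^ 3) +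 ((-139968 : L) * a ^ 5 * a⁻¹ ^ 6 * t⁻¹ ^ 3) + ((-279936 : L) * a ^ 5 * a⁻¹ ^ 6 * t⁻¹ ^ 3 * a⁻¹⁻¹) + ((-233280 : L) * a ^ 5 * a⁻¹ ^ 6 * t⁻¹ ^ 3 * a⁻¹⁻¹ ^ 2) + ((-103680 : L) * a ^ 5 * a⁻¹ ^ 6 * t⁻¹ ^ 3 * a⁻¹⁻¹ ^ 3) + ((-25920 : L) * a ^ 5 * a⁻¹ ^ 6 * t⁻¹ ^ 3 * a⁻¹⁻¹ ^ 4) + ((-3456 : L) * a ^ 5 * a⁻¹ ^ 6 * t⁻¹ ^ 3 * a⁻¹⁻¹ ^ 5) + ((1259712 : L) * a ^ 5 * a⁻¹ ^ 9 * t⁻¹ ^ 3) + ((3779136 : L) * a ^ 5 * a⁻¹ ^ 9 * t⁻¹ ^ 3 * a⁻¹⁻¹) + ((5038848 : L) * a ^ 5 * a⁻¹ ^ 9 * t⁻¹ ^ 3 * a⁻¹⁻¹ ^ 2) + ((3919104 : L) * a ^ 5 * a⁻¹ ^ 9 * t⁻¹ ^ 3 * a⁻¹⁻¹ ^ 3)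 + ((1959552 : L) * a ^ 5 * a⁻¹ ^ 9 * t⁻¹ ^ 3 * a⁻¹⁻¹ ^ 4) + ((653184 : L) * a ^ 5 * a⁻¹ ^ 9 * t⁻¹ ^ 3 * a⁻¹⁻¹ ^ 5) + ((5184 : L) * a ^ 6 * a⁻¹ ^ 3 * t⁻¹ ^ 3) + ((1728 : L) * a ^ 6 * a⁻¹ ^ 3 * t⁻¹ ^ 3 * a⁻¹⁻¹) + ((192 : L) * a ^ 6 * a⁻¹ ^ 3 * t⁻¹ ^ 3 * a⁻¹⁻¹ ^ 2) + ((-279936 : L) * a ^ 6 * a⁻¹ ^ 6 * t⁻¹ ^ 3) + ((-233280 : L) * a ^ 6 * a⁻¹ ^ 6 * t⁻¹ ^ 3 * a⁻¹⁻¹) + ((-103680 : L) * a ^ 6 * a⁻¹ ^ 6 * t⁻¹ ^ 3 * a⁻¹⁻¹ ^ 2) + ((-25920 : L) * a ^ 6 * a⁻¹ ^ 6 * t⁻¹ ^ 3 * a⁻¹⁻¹ ^ 3) + ((-3456 : L) * a ^ 6 * a⁻¹ ^ 6 * t⁻¹ ^ 3 * a⁻¹⁻¹ ^ 4) + ((-192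 : L) * a ^ 6 * a⁻¹ ^ 6 * t⁻¹ ^ 3 * a⁻¹⁻¹ ^ 5) + ((3779136 : L) * a ^ 6 * a⁻¹ ^ 9 * t⁻¹ ^ 3) + ((5038848 : L) * a ^ 6 * a⁻¹ ^ 9 * t⁻¹ ^ 3 * a⁻¹⁻¹) + ((3919104 : L) * a ^ 6 * a⁻¹ ^ 9 * t⁻¹ ^ 3 * a⁻¹⁻¹ ^ 2) + ((1959552 : L) * a ^ 6 * a⁻¹ ^ 9 * t⁻¹ ^ 3 * a⁻¹⁻¹ ^ 3) + ((653184 : L) * a ^ 6 * a⁻¹ ^ 9 * t⁻¹ ^ 3 * a⁻¹⁻¹ ^ 4) + ((145152 : L) * a ^ 6 * a⁻¹ ^ 9 * t⁻¹ ^ 3 * a⁻¹⁻¹ ^ 5) + ((1728 : L) * a ^ 7 * a⁻¹ ^ 3 * t⁻¹ ^ 3) + ((192 : L) * a ^ 7 * a⁻¹ ^ 3 * t⁻¹ ^ 3 * a⁻¹⁻¹) + ((-233280 : L) * a ^ 7 * a⁻¹ ^ 6 * t⁻¹ ^ 3) + ((-103680 : L) * a ^ 7 * a⁻¹ ^ 6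 * t⁻¹ ^ 3 * a⁻¹⁻¹) + ((-25920 : L) * a ^ 7 * a⁻¹ ^ 6 * t⁻¹ ^ 3 * a⁻¹⁻¹ ^ 2) + ((-3456 : L) * a ^ 7 * a⁻¹ ^ 6 * t⁻¹ ^ 3 * a⁻¹⁻¹ ^ 3) + ((-192 : L) * a ^ 7 * a⁻¹ ^ 6 * t⁻¹ ^ 3 * a⁻¹⁻¹ ^ 4) + ((5038848 : L) * a ^ 7 * a⁻¹ ^ 9 * t⁻¹ ^ 3) + ((3919104 : L) * a ^ 7 * a⁻¹ ^ 9 * t⁻¹ ^ 3 * a⁻¹⁻¹) + ((1959552 : L) * a ^ 7 * a⁻¹ ^ 9 * t⁻¹ ^ 3 * a⁻¹⁻¹ ^ 2) + ((653184 : L) * a ^ 7 * a⁻¹ ^ 9 * t⁻¹ ^ 3 * a⁻¹⁻¹ ^ 3) + ((145152 : L) * a ^ 7 * a⁻¹ ^ 9 * t⁻¹ ^ 3 * a⁻¹⁻¹ ^ 4) + ((20736 : L) * a ^ 7 * a⁻¹ ^ 9 * t⁻¹ ^ 3 * a⁻¹⁻¹ ^ 5) + ((192 : L) * a ^ 8 *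 a⁻¹ ^ 3 * t⁻¹ ^ 3) + ((-103680 : L) * a ^ 8 * a⁻¹ ^ 6 * t⁻¹ ^ 3) + ((-25920 : L) * a ^ 8 * a⁻¹ ^ 6 * t⁻¹ ^ 3 * a⁻¹⁻¹) + ((-3456 : L) * a ^ 8 * a⁻¹ ^ 6 * t⁻¹ ^ 3 * a⁻¹⁻¹ ^ 2) + ((-192 : L) * a ^ 8 * a⁻¹ ^ 6 * t⁻¹ ^ 3 * a⁻¹⁻¹ ^ 3) + ((3919104 : L) * a ^ 8 * a⁻¹ ^ 9 * t⁻¹ ^ 3) + ((1959552 : L) * a ^ 8 * a⁻¹ ^ 9 * t⁻¹ ^ 3 * a⁻¹⁻¹) + ((653184 : L) * a ^ 8 * a⁻¹ ^ 9 * t⁻¹ ^ 3 * a⁻¹⁻¹ ^ 2) + ((145152 : L) * a ^ 8 * a⁻¹ ^ 9 * t⁻¹ ^ 3 * a⁻¹⁻¹ ^ 3) + ((20736 : L) * a ^ 8 * a⁻¹ ^ 9 * t⁻¹ ^ 3 * a⁻¹⁻¹ ^ 4) + ((1728 : L) * a ^ 8 * a⁻¹ ^ 9 * t⁻¹ ^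 3 * a⁻¹⁻¹ ^ 5) + ((-25920 : L) * a ^ 9 * a⁻¹ ^ 6 * t⁻¹ ^ 3) + ((-3456 : L) * a ^ 9 * a⁻¹ ^ 6 * t⁻¹ ^ 3 * a⁻¹⁻¹) + ((-192 : L) * a ^ 9 * a⁻¹ ^ 6 * t⁻¹ ^ 3 * a⁻¹⁻¹ ^ 2) + ((1959552 : L) * a ^ 9 * a⁻¹ ^ 9 * t⁻¹ ^ 3) + ((653184 : L) * a ^ 9 * a⁻¹ ^ 9 * t⁻¹ ^ 3 * a⁻¹⁻¹) + ((145152 : L) * a ^ 9 * a⁻¹ ^ 9 * t⁻¹ ^ 3 * a⁻¹⁻¹ ^ 2) + ((20736 : L) * a ^ 9 * a⁻¹ ^ 9 * t⁻¹ ^ 3 * a⁻¹⁻¹ ^ 3) + ((1728 : L) * a ^ 9 * a⁻¹ ^ 9 * t⁻¹ ^ 3 * a⁻¹⁻¹ ^ 4) + ((64 : L) * a ^ 9 * a⁻¹ ^ 9 * t⁻¹ ^ 3 * a⁻¹⁻¹ ^ 5) + ((-3456 : L) * a ^ 10 * a⁻¹ ^ 6 * t⁻¹ ^ 3) + ((-192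 : L) * a ^ 10 * a⁻¹ ^ 6 * t⁻¹ ^ 3 * a⁻¹⁻¹) + ((653184 : L) * a ^ 10 * a⁻¹ ^ 9 * t⁻¹ ^ 3) + ((145152 : L) * a ^ 10 * a⁻¹ ^ 9 * t⁻¹ ^ 3 * a⁻¹⁻¹) + ((20736 : L) * a ^ 10 * a⁻¹ ^ 9 * t⁻¹ ^ 3 * a⁻¹⁻¹ ^ 2) + ((1728 : L) * a ^ 10 * a⁻¹ ^ 9 * t⁻¹ ^ 3 * a⁻¹⁻¹ ^ 3) + ((64 : L) * a ^ 10 * a⁻¹ ^ 9 * t⁻¹ ^ 3 * a⁻¹⁻¹ ^ 4) + ((-192 : L) * a ^ 11 * a⁻¹ ^ 6 * t⁻¹ ^ 3) + ((145152 : L) * a ^ 11 * a⁻¹ ^ 9 * t⁻¹ ^ 3) + ((20736 : L) * a ^ 11 * a⁻¹ ^ 9 * t⁻¹ ^ 3 * a⁻¹⁻¹) + ((1728 : L) * a ^ 11 * a⁻¹ ^ 9 * t⁻¹ ^ 3 * a⁻¹⁻¹ ^ 2) + ((64 : L) * a ^ 11 * a⁻¹ ^ 9 * t⁻¹ ^ 3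 * a⁻¹⁻¹ ^ 3) + ((20736 : L) * a ^ 12 * a⁻¹ ^ 9 * t⁻¹ ^ 3) + ((1728 : L) * a ^ 12 * a⁻¹ ^ 9 * t⁻¹ ^ 3 * a⁻¹⁻¹) + ((64 : L) * a ^ 12 * a⁻¹ ^ 9 * t⁻¹ ^ 3 * a⁻¹⁻¹ ^ 2) + ((1728 : L) * a ^ 13 * a⁻¹ ^ 9 * t⁻¹ ^ 3) + ((64 : L) * a ^ 13 * a⁻¹ ^ 9 * t⁻¹ ^ 3 * a⁻¹⁻¹) + ((64 : L) * a ^ 14 * a⁻¹ ^ 9 * t⁻¹ ^ 3)) * hBa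
end
end

section
/- Let d ∈ ℚ be a non-square, K = ℚ(√d), and let σ denote the nontrivial element of Gal(K/ℚ). Let a, b ∈ K with Δ = −16(4a³ + 27b²) ≠ 0, and write N(x) = x·σ(x) ∈ ℚ for the norm. Let L be a field containing K together with an element δ satisfying δ⁶ = Δ, let T be transcendental over L, and set t = T/δ ∈ L(T). Then the Weierstrass equation of F⁽⁶⁾, namely Y² = X³ − 3aσ(a)·X + (1/64)(Δt⁶ + 864bσ(b) + σ(Δ)/t⁶), becomes, after the substitution t = T/δ, exactly the equation Y² = X³ − 3N(a)·X + (1/64)(T⁶ + 864N(b) + N(Δ)/T⁶), all of whose coefficients lie in ℚ(T). In particular, the elliptic surface F⁽⁶⁾ attached to the conjugate pair of elliptic curves E₁ : y² = x³ + ax + b over K and E₂ : y² = x³ + σ(a)x + σ(b) has a model defined over ℚ. -/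
/-!
Writing `x = p + q√d` and using that `σ` fixes `ℚ` and negates `√d`, the norm
`x σ(x) = p² - d q²` is rational. Since `δ⁶ = Δ`, the substitution `t = T/δ` turns `Δ t⁶`
into `T⁶` and `σ(Δ)/t⁶` into `Δ σ(Δ)/T⁶`, so only norms remain among the coefficients.
-/

theorem AlgEquiv.exists_mul_apply_eq_algebraMap {R K : Type*} [CommRing R] [CommRing K]
    [Algebra R K] (d : R) (s : K) (hs : s ^ 2 = algebraMap R K d)
    (hgen : ∀ x : K, ∃ p q : R, x = algebraMap R K p + algebraMap R K q * s)
    (σ : K ≃ₐ[R] K) (hσ : σ s = -s) (x : K) :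
    ∃ r : R, x * σ x = algebraMap R K r := by
  obtain ⟨p, q, rfl⟩ := hgen x
  refine ⟨p ^ 2 - q ^ 2 * d, ?_⟩
  simp only [map_add, map_mul, map_sub, map_pow, AlgEquiv.commutes, hσ, ← hs]
  ring

theorem pow_mul_div_pow_add_add_div_div_pow {F : Type*} [Field F] {c : F} (hc : c ≠ 0)
    (k : ℕ) (x n B : F) :
    c ^ k * (x / c) ^ k + n + B / (x / c) ^ k = x ^ k + n + c ^ k * B / x ^ k := by
  rw [div_pow, mul_div_cancel₀ _ (pow_ne_zero k hc), div_div_eq_mul_div, mul_comm B]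

theorem F6_conjugate_model_over_Q_general
    (d : ℚ)
    (K : Type) [Field K] [Algebra ℚ K]
    (sqd : K) (hsqd : sqd ^ 2 = algebraMap ℚ K d)
    (hgen : ∀ x : K, ∃ p q : ℚ, x = algebraMap ℚ K p + algebraMap ℚ K q * sqd)
    (σ : K ≃ₐ[ℚ] K) (hσ : σ sqd = -sqd)
    (a b : K) (hΔ : -16 * (4 * a ^ 3 + 27 * b ^ 2) ≠ 0)
    (L : Type) [Field L] (ι : K →+* L)
    (δ : L) (hδ : δ ^ 6 = ι (-16 * (4 * a ^ 3 + 27 * b ^ 2))) :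
    -- the norms `N(a), N(b), N(Δ)` are rational numbers
    (∃ qa : ℚ, a * σ a = algebraMap ℚ K qa) ∧
    (∃ qb : ℚ, b * σ b = algebraMap ℚ K qb) ∧
    (∃ qΔ : ℚ, (-16 * (4 * a ^ 3 + 27 * b ^ 2)) * σ (-16 * (4 * a ^ 3 + 27 * b ^ 2))
      = algebraMap ℚ K qΔ) ∧
    -- after the substitution `t = T/δ`, the `a₆`-coefficient of `F⁽⁶⁾` becomes exactly
    -- `(1/64)(T⁶ + 864·N(b) + N(Δ)/T⁶)` (the `a₄`-coefficient `−3aσ(a) = −3N(a)` is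
    -- literally unchanged), so all coefficients lie in `ℚ(T)`
    (1 / 64 : RatFunc L) *
        (algebraMap L (RatFunc L) (ι (-16 * (4 * a ^ 3 + 27 * b ^ 2)))
            * (RatFunc.X / algebraMap L (RatFunc L) δ) ^ 6
          + 864 * algebraMap L (RatFunc L) (ι (b * σ b))
          + algebraMap L (RatFunc L) (ι (σ (-16 * (4 * a ^ 3 + 27 * b ^ 2))))
            / (RatFunc.X / algebraMap L (RatFunc L) δ) ^ 6)
      = (1 / 64 : RatFunc L) *
        (RatFunc.X ^ 6 + 864 * algebraMap L (RatFunc L) (ι (b * σ b))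
          + algebraMap L (RatFunc L)
              (ι ((-16 * (4 * a ^ 3 + 27 * b ^ 2)) * σ (-16 * (4 * a ^ 3 + 27 * b ^ 2))))
            / RatFunc.X ^ 6) := by
  have norm_rat := σ.exists_mul_apply_eq_algebraMap d sqd hsqd hgen hσ
  refine ⟨norm_rat a, norm_rat b, norm_rat _, ?_⟩
  generalize -16 * (4 * a ^ 3 + 27 * b ^ 2) = Δ at hΔ hδ ⊢
  have hδ0 : δ ≠ 0 := ne_zero_pow (by norm_num) (hδ ▸ (map_ne_zero ι).mpr hΔ)
  have hCδ : algebraMap L (RatFunc L) δ ≠ 0 := (map_ne_zero _).mpr hδ0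
  rw [map_mul ι Δ, map_mul (algebraMap L (RatFunc L)), ← hδ, map_pow]
  exact congrArg _ (pow_mul_div_pow_add_add_div_div_pow hCδ 6 _ _ _)

/-- Let `K = ℚ(√d)` with `d` a non-square rational, `σ` the nontrivial element of
`Gal(K/ℚ)`, and `E₁ : y² = x³ + ax + b` with conjugate curve `E₂ : y² = x³ + σ(a)x + σ(b)`,
of discriminant `Δ = −16(4a³+27b²) ≠ 0`. In a field `L ⊇ K` containing a sixth root `δ`
of `Δ`, after substituting `t = T/δ`, the equation of `F⁽⁶⁾` becomes exactly
`Y² = X³ − 3N(a)X + (1/64)(T⁶ + 864N(b) + N(Δ)/T⁶)`, whose coefficients `N(a) = aσ(a)`,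
`N(b) = bσ(b)`, `N(Δ) = Δσ(Δ)` are rational; in particular `F⁽⁶⁾` for this conjugate pair
has a model defined over `ℚ`. -/
theorem F6_conjugate_model_over_Q
    (d : ℚ) (hd : ¬∃ r : ℚ, r ^ 2 = d)
    (K : Type) [Field K] [Algebra ℚ K]
    (sqd : K) (hsqd : sqd ^ 2 = algebraMap ℚ K d)
    (hgen : ∀ x : K, ∃ p q : ℚ, x = algebraMap ℚ K p + algebraMap ℚ K q * sqd)
    (σ : K ≃ₐ[ℚ] K) (hσ : σ sqd = -sqd)
    (a b : K) (hΔ : -16 * (4 * a ^ 3 + 27 * b ^ 2) ≠ 0)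
    (L : Type) [Field L] (ι : K →+* L)
    (δ : L) (hδ : δ ^ 6 = ι (-16 * (4 * a ^ 3 + 27 * b ^ 2))) :
    -- the norms `N(a), N(b), N(Δ)` are rational numbers
    (∃ qa : ℚ, a * σ a = algebraMap ℚ K qa) ∧
    (∃ qb : ℚ, b * σ b = algebraMap ℚ K qb) ∧
    (∃ qΔ : ℚ, (-16 * (4 * a ^ 3 + 27 * b ^ 2)) * σ (-16 * (4 * a ^ 3 + 27 * b ^ 2))
      = algebraMap ℚ K qΔ) ∧
    -- after the substitution `t = T/δ`, the `a₆`-coefficient of `F⁽⁶⁾` becomes exactly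
    -- `(1/64)(T⁶ + 864·N(b) + N(Δ)/T⁶)` (the `a₄`-coefficient `−3aσ(a) = −3N(a)` is
    -- literally unchanged), so all coefficients lie in `ℚ(T)`
    (1 / 64 : RatFunc L) *
        (algebraMap L (RatFunc L) (ι (-16 * (4 * a ^ 3 + 27 * b ^ 2)))
            * (RatFunc.X / algebraMap L (RatFunc L) δ) ^ 6
          + 864 * algebraMap L (RatFunc L) (ι (b * σ b))
          + algebraMap L (RatFunc L) (ι (σ (-16 * (4 * a ^ 3 + 27 * b ^ 2))))
            / (RatFunc.X / algebraMap L (RatFunc L) δ) ^ 6)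
      = (1 / 64 : RatFunc L) *
        (RatFunc.X ^ 6 + 864 * algebraMap L (RatFunc L) (ι (b * σ b))
          + algebraMap L (RatFunc L)
              (ι ((-16 * (4 * a ^ 3 + 27 * b ^ 2)) * σ (-16 * (4 * a ^ 3 + 27 * b ^ 2))))
            / RatFunc.X ^ 6) :=
  F6_conjugate_model_over_Q_general d K sqd hsqd hgen σ hσ a b hΔ L ι δ hδ
end
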